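/- Let X be a Banach space, (x_n) a sequence in X with liminf ‖x_n‖ = 0, and I an ideal on ℕ with the Baire property. If there exists a strictly increasing s' : ℕ → ℕ for which the partial sums of ∑ x_{s'(n)} are unbounded, then the set E(I) = {s ∈ S : (∑_{i=1}^n x_{s(i)})_n is I-bounded} is meager in S. -/

import Mathlib

/-!
The Baire property of `I` and the topological 0-1 law for sets invariant under finite
modifications make `I` meagre in the Cantor space; by Talagrand's argument this yields
intervals `[n k, n (k + 1))` of which each member of `I` contains only finitely many. Hence a
sequence in `E(I)` with bound `M` has, from some interval on, a partial sum of norm `≤ M`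
inside every interval. For fixed `M` and starting interval this is a closed condition with
empty interior: every finite prefix extends to a strictly increasing sequence whose partial
sums eventually exceed `M` in norm. When `‖x n‖` is infinitely often small, append a block of
`s'` with large sum and then terms of summable norm; when `‖x n‖ → ∞` (which also gives
`liminf = 0`, as the junk value of `liminf` for a sequence unbounded above), append terms of
ever larger norm.
-/

open Filter

/-- `S`, the Polish space of strictly increasing functions `ℕ → ℕ`,
as a subspace of the product space `ℕ → ℕ`. -/
abbrev IncSeq : Type := {s : ℕ → ℕ // StrictMono s}

/-- An ideal `I` on `ℕ` has the Baire property if the corresponding set of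
characteristic functions is Baire measurable in the Cantor space `ℕ → Bool`. -/
def IdealHasBaireProperty (I : Set (Set ℕ)) : Prop :=
  BaireMeasurableSet {t : ℕ → Bool | {n : ℕ | t n = true} ∈ I}
open Topology Set PiNat

theorem PiNat.exists_cylinder_subset_of_mem_nhds {E : ℕ → Type*} [∀ n, TopologicalSpace (E n)]
    [∀ n, DiscreteTopology (E n)] {x : ∀ n, E n} {u : Set (∀ n, E n)} (hu : u ∈ 𝓝 x) :
    ∃ n, cylinder x n ⊆ u := by
  obtain ⟨_, ⟨y, n, rfl⟩, hx, hsub⟩ := (isTopologicalBasis_cylinders E).mem_nhds_iff.1 hu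
  exact ⟨n, mem_cylinder_iff_eq.1 hx ▸ hsub⟩

def xorHomeomorph (e : ℕ → Bool) : (ℕ → Bool) ≃ₜ (ℕ → Bool) where
  toFun t i := Bool.xor (e i) (t i)
  invFun t i := Bool.xor (e i) (t i)
  left_inv t := by funext i; simp
  right_inv t := by funext i; simp
  continuous_toFun := continuous_pi fun i =>
    (continuous_of_discreteTopology (f := Bool.xor (e i))).comp (continuous_apply i)
  continuous_invFun := continuous_pi fun i =>
    (continuous_of_discreteTopology (f := Bool.xor (e i))).comp (continuous_apply i)

@[simp]
theorem xorHomeomorph_apply (e t : ℕ → Bool) (n : ℕ) :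
    xorHomeomorph e t n = (e n ^^ t n) :=
  rfl

theorem xorHomeomorph_apply_ne_iff (e t : ℕ → Bool) (n : ℕ) :
    xorHomeomorph e t n ≠ t n ↔ e n = true := by
  rw [xorHomeomorph_apply]; cases e n <;> simp

theorem BaireMeasurableSet.isMeagre_or_mem_residual {J : Set (ℕ → Bool)}
    (hJ : BaireMeasurableSet J)
    (hinv : ∀ t t' : ℕ → Bool, {n | t n ≠ t' n}.Finite → t ∈ J → t' ∈ J) :
    IsMeagre J ∨ J ∈ residual (ℕ → Bool) := by
  obtain ⟨U, hUo, hJU⟩ := hJ.residualEq_isOpen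
  rcases U.eq_empty_or_nonempty with rfl | ⟨u, hu⟩
  · exact .inl <| hJU.mono fun t ht htJ => (ht.mp htJ : t ∈ (∅ : Set _))
  right
  obtain ⟨N, hN⟩ := exists_cylinder_subset_of_mem_nhds (hUo.mem_nhds hu)
  have hmeagre : IsMeagre (cylinder u N \ J) :=
    hJU.mono fun t ht ⟨hC, hnJ⟩ => hnJ (ht.mpr (hN hC))
  -- flipping the coordinates below `N` where `t` differs from `u` moves `t` into `cylinder u N`
  have hcover : Jᶜ ⊆ ⋃ D : Finset ℕ,
      xorHomeomorph (fun i => decide (i ∈ D)) ⁻¹' (cylinder u N \ J) := by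
    intro t htJ
    refine mem_iUnion.2
      ⟨(Finset.range N).filter (fun i => t i ≠ u i), fun i hi => ?_, fun hJ => ?_⟩
    · by_cases h : t i = u i <;> simp_all [Bool.eq_not_iff]
    · refine htJ (hinv _ _ ?_ hJ)
      simp_rw [xorHomeomorph_apply_ne_iff, decide_eq_true_iff, Finset.setOfPred_mem]
      exact Finset.finite_toSet _
  have := (isMeagre_iUnion fun D => hmeagre.preimage_of_isOpenMap
    (xorHomeomorph _).continuous (xorHomeomorph _).isOpenMap).mono hcover
  rwa [IsMeagre, compl_compl] at this

theorem IdealHasBaireProperty.isMeagre {I : Set (Set ℕ)} (hBP : IdealHasBaireProperty I)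
    (hUnion : ∀ A B : Set ℕ, A ∈ I → B ∈ I → A ∪ B ∈ I)
    (hSub : ∀ A B : Set ℕ, A ⊆ B → B ∈ I → A ∈ I)
    (hProper : (Set.univ : Set ℕ) ∉ I)
    (hFin : ∀ A : Set ℕ, A.Finite → A ∈ I) :
    IsMeagre {t : ℕ → Bool | {n | t n = true} ∈ I} := by
  refine (BaireMeasurableSet.isMeagre_or_mem_residual hBP fun t t' hfin ht =>
    hSub _ _ (fun n hn => ?_) (hUnion _ _ ht (hFin _ hfin))).resolve_right fun hres => ?_
  · by_cases h : t n = t' n <;> simp_all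
  have hflip : xorHomeomorph (fun _ => true) ⁻¹' {t | {n | t n = true} ∈ I} ∈ residual _ := by
    rw [← (xorHomeomorph _).residual_map_eq] at hres
    exact hres
  obtain ⟨t, ht, ht'⟩ := (dense_of_mem_residual (inter_mem hres hflip)).nonempty
  refine hProper (hSub _ _ (fun n _ => ?_) (hUnion _ _ ht ht'))
  cases h : t n <;> simp [h]

theorem IsMeagre.exists_seq_isOpen_dense {X : Type*} [TopologicalSpace X] {s : Set X}
    (hs : IsMeagre s) :
    ∃ U : ℕ → Set X, (∀ k, IsOpen (U k)) ∧ (∀ k, Dense (U k)) ∧ s ⊆ (⋂ k, U k)ᶜ := by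
  obtain ⟨S, hSo, hSd, hSc, hSs⟩ := mem_residual_iff.1 hs
  obtain ⟨U, hU⟩ := (hSc.insert univ).exists_eq_range (insert_nonempty _ _)
  have hmem : ∀ k, U k ∈ insert univ S := fun k => hU ▸ mem_range_self k
  refine ⟨U, fun k => ?_, fun k => ?_, ?_⟩
  · rcases hmem k with h | h
    · exact h ▸ isOpen_univ
    · exact hSo _ h
  · rcases hmem k with h | h
    · exact h ▸ dense_univ
    · exact hSd _ h
  · rw [← sInter_range, ← hU, sInter_insert, univ_inter]
    exact subset_compl_comm.1 hSs

theorem exists_pattern_forall_mem_of_finset {U : Set (ℕ → Bool)} (hUo : IsOpen U)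
    (hUd : Dense U) (m : ℕ) (P : Finset (ℕ → Bool)) :
    ∃ m' ≥ m, ∃ τ : ℕ → Bool, ∀ σ ∈ P, ∀ t ∈ cylinder σ m,
      (∀ i ∈ Ico m m', t i = τ i) → t ∈ U := by
  classical
  induction P using Finset.induction_on with
  | empty => exact ⟨m, le_rfl, fun _ => false, by simp⟩
  | insert σ P _ ih =>
    obtain ⟨m₁, hm₁, τ₁, hτ₁⟩ := ih
    let ρ : ℕ → Bool := fun i => if i < m then σ i else τ₁ i
    obtain ⟨p, hpρ, hpU⟩ := hUd.inter_open_nonempty (cylinder ρ m₁) (isOpen_cylinder _ _ _)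
      ⟨ρ, self_mem_cylinder _ _⟩
    obtain ⟨m₂, hm₂⟩ := exists_cylinder_subset_of_mem_nhds (hUo.mem_nhds hpU)
    refine ⟨max m₁ m₂, le_max_of_le_left hm₁, p, fun σ' hσ' t ht htp => ?_⟩
    rcases Finset.mem_insert.1 hσ' with rfl | hσ'
    · refine hm₂ fun i hi => ?_
      by_cases him : i < m
      · rw [ht i him, hpρ i (him.trans_le hm₁)]
        exact (if_pos him).symm
      · exact htp i ⟨not_lt.1 him, hi.trans_le (le_max_right _ _)⟩
    · refine hτ₁ σ' hσ' t ht fun i hi => ?_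
      rw [htp i ⟨hi.1, hi.2.trans_le (le_max_left _ _)⟩, hpρ i hi.2]
      exact if_neg (not_lt.2 hi.1)

theorem exists_pattern_forall_mem {U : Set (ℕ → Bool)} (hUo : IsOpen U) (hUd : Dense U)
    (m : ℕ) : ∃ m' > m, ∃ τ : ℕ → Bool, ∀ t, (∀ i ∈ Ico m m', t i = τ i) → t ∈ U := by
  classical
  obtain ⟨m', hm', τ, hτ⟩ := exists_pattern_forall_mem_of_finset hUo hUd m
    ((Finset.range m).powerset.image fun D i => decide (i ∈ D))
  refine ⟨m' + 1, by omega, τ, fun t ht => hτ _ (Finset.mem_image_of_mem _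
    (Finset.mem_powerset.2 (Finset.filter_subset (fun i => t i = true) _))) t
    (fun i hi => by simp [hi]) fun i hi => ht i ⟨hi.1, hi.2.trans (Nat.lt_succ_self m')⟩⟩

theorem exists_strictMono_eventually_not_Ico_subset {I : Set (Set ℕ)}
    (hSub : ∀ A B : Set ℕ, A ⊆ B → B ∈ I → A ∈ I)
    (hI : IsMeagre {t : ℕ → Bool | {n | t n = true} ∈ I}) :
    ∃ n : ℕ → ℕ, StrictMono n ∧ ∀ A ∈ I, ∀ᶠ k in atTop, ¬ Ico (n k) (n (k + 1)) ⊆ A := by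
  classical
  obtain ⟨U, hUo, hUd, hIU⟩ := hI.exists_seq_isOpen_dense
  let V : ℕ → Set (ℕ → Bool) := fun k => ⋂ j ∈ Iic k, U j
  have hVo : ∀ k, IsOpen (V k) := fun k => (finite_Iic k).isOpen_biInter fun j _ => hUo j
  have hVd : ∀ k, Dense (V k) := fun k =>
    dense_biInter_of_isOpen (fun j _ => hUo j) (finite_Iic k).countable fun j _ => hUd j
  choose next hnext τ hτ using fun k m => exists_pattern_forall_mem (hVo k) (hVd k) m
  let n : ℕ → ℕ := fun k => Nat.rec (motive := fun _ => ℕ) 0 next k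
  have hn : StrictMono n := strictMono_nat_of_lt_succ fun k => hnext k (n k)
  refine ⟨n, hn, fun A hA => ?_⟩
  by_contra hfreq
  simp only [not_eventually, not_not] at hfreq
  -- `B ⊆ A` follows `τ k` on each interval `k` inside `A`, so `b ∈ V k` for infinitely many `k`
  let B : Set ℕ := {i | i ∈ A ∧ ∃ k, i ∈ Ico (n k) (n (k + 1)) ∧ τ k (n k) i = true}
  let b : ℕ → Bool := fun i => decide (i ∈ B)
  have hbI : b ∈ {t : ℕ → Bool | {n | t n = true} ∈ I} :=
    hSub _ _ (fun i hi => (of_decide_eq_true (id hi : b i = true)).1) hA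
  have hbV : ∀ k, Ico (n k) (n (k + 1)) ⊆ A → b ∈ V k := by
    refine fun k hk => hτ k (n k) b fun i hi => Bool.eq_iff_iff.2 ?_
    have huniq : ∀ k', i ∈ Ico (n k') (n (k' + 1)) → k' = k := fun k' hk' =>
      hn.monotone.pairwise_disjoint_on_Ico_succ.eq (not_disjoint_iff.2 ⟨i, hk', hi⟩)
    simp only [b, B, mem_ofPred_eq, decide_eq_true_iff, hk hi, true_and]
    exact ⟨fun ⟨k', hk', h⟩ => huniq k' hk' ▸ h, fun h => ⟨k, hi, h⟩⟩
  refine hIU hbI (mem_iInter.2 fun j => ?_)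
  obtain ⟨k, hjk, hk⟩ := frequently_atTop.1 hfreq j
  exact mem_iInter₂.1 (hbV k hk) j hjk

theorem frequently_lt_or_tendsto_atTop_of_liminf_eq_zero {α : Type*} {f : Filter α}
    {u : α → ℝ} (h : liminf u f = 0) :
    (∀ ε > 0, ∃ᶠ a in f, u a < ε) ∨ Tendsto u f atTop := by
  by_cases hcob : f.IsCoboundedUnder (· ≥ ·) u
  · exact .inl fun ε hε => frequently_lt_of_liminf_lt hcob (h.trans_lt hε)
  · refine .inr (tendsto_atTop.2 fun b => ?_)
    simp only [IsCoboundedUnder, IsCobounded, not_exists, not_forall] at hcob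
    obtain ⟨a, ha, hba⟩ := hcob b
    exact (eventually_map.1 ha).mono fun x hx => (not_le.1 hba).le.trans hx

section Splice

variable {α : Type*} {N : ℕ} {s t : ℕ → α}

def spliceAt (N : ℕ) (s t : ℕ → α) : ℕ → α := fun p => if p < N then s p else t (p - N)

theorem spliceAt_of_lt {p : ℕ} (h : p < N) : spliceAt N s t p = s p := if_pos h

@[simp]
theorem spliceAt_add (p : ℕ) : spliceAt N s t (N + p) = t p := by simp [spliceAt]

theorem StrictMono.spliceAt [Preorder α] (hs : StrictMono s) (ht : StrictMono t)
    (h : ∀ p < N, s p < t 0) : StrictMono (spliceAt N s t) := by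
  refine strictMono_nat_of_lt_succ fun p => ?_
  simp only [_root_.spliceAt]
  split_ifs with h₁ h₂ h₂
  · exact hs (Nat.lt_succ_self p)
  · rw [show p + 1 - N = 0 by omega]
    exact h p h₁
  · omega
  · exact ht (by omega)

theorem sum_range_spliceAt {M : Type*} [AddCommMonoid M] (f : α → M) (r : ℕ) :
    ∑ p ∈ Finset.range (N + r), f (spliceAt N s t p) =
      ∑ p ∈ Finset.range N, f (s p) + ∑ p ∈ Finset.range r, f (t p) := by
  rw [Finset.sum_range_add]
  congr 1
  · exact Finset.sum_congr rfl fun p hp => by rw [spliceAt_of_lt (Finset.mem_range.1 hp)]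
  · simp only [spliceAt_add]

end Splice

section PartialSums

variable {X : Type*} [SeminormedAddCommGroup X] {x : ℕ → X}

theorem exists_lt_norm_sum_range_add {y : ℕ → X}
    (hy : ¬ ∃ M : ℝ, ∀ n : ℕ, ‖∑ i ∈ Finset.range n, y i‖ ≤ M) (a : ℕ) (R : ℝ) :
    ∃ c, R < ‖∑ i ∈ Finset.range c, y (a + i)‖ := by
  set T := ∑ i ∈ Finset.range a, ‖y i‖
  have hle : ∀ n ≤ a, ‖∑ i ∈ Finset.range n, y i‖ ≤ T := fun n hn =>
    (norm_sum_le _ _).trans <| Finset.sum_le_sum_of_subset_of_nonneg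
      (Finset.range_subset_range.2 hn) fun _ _ _ => norm_nonneg _
  simp only [not_exists, not_forall, not_le] at hy
  obtain ⟨n, hn⟩ := hy (|R| + T)
  have han : a ≤ n := by
    by_contra h
    linarith [hle n (by omega), abs_nonneg R]
  obtain ⟨c, rfl⟩ := Nat.exists_eq_add_of_le han
  refine ⟨c, ?_⟩
  have := norm_sub_norm_le (∑ i ∈ Finset.range (a + c), y i) (∑ i ∈ Finset.range a, y i)
  rw [Finset.sum_range_add, add_sub_cancel_left] at this
  rw [Finset.sum_range_add] at hn
  linarith [hle a le_rfl, le_abs_self R]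

theorem exists_strictMono_norm_sum_le_one (hx : ∀ ε > 0, ∃ᶠ n in atTop, ‖x n‖ < ε) (K : ℕ) :
    ∃ t : ℕ → ℕ, StrictMono t ∧ K < t 0 ∧ ∀ r, ‖∑ p ∈ Finset.range r, x (t p)‖ ≤ 1 := by
  obtain ⟨t, ht, hsmall⟩ : ∃ t : ℕ → ℕ, StrictMono t ∧
      ∀ p, K < t p ∧ ‖x (t p)‖ < (1 / 2) ^ p / 2 :=
    extraction_forall_of_frequently (P := fun p n => K < n ∧ ‖x n‖ < (1 / 2) ^ p / 2) fun p =>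
      ((hx _ (by positivity)).and_eventually (eventually_gt_atTop K)).mono fun _ h => ⟨h.2, h.1⟩
  refine ⟨t, ht, (hsmall 0).1, fun r => ?_⟩
  calc ‖∑ p ∈ Finset.range r, x (t p)‖ ≤ ∑ p ∈ Finset.range r, ‖x (t p)‖ := norm_sum_le _ _
    _ ≤ ∑ p ∈ Finset.range r, (1 / 2 : ℝ) ^ p / 2 :=
      Finset.sum_le_sum fun p _ => (hsmall p).2.le
    _ ≤ 1 := by
      rw [← Finset.sum_div]
      linarith [sum_geometric_two_le r]

theorem exists_strictMono_lt_norm_add_sum (hx : Tendsto (fun n => ‖x n‖) atTop atTop)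
    (P : X) (K : ℕ) (M : ℝ) :
    ∃ t : ℕ → ℕ, StrictMono t ∧ K < t 0 ∧
      ∀ r, M < ‖P + ∑ p ∈ Finset.range (r + 1), x (t p)‖ := by
  have hnext : ∀ q : ℕ × X, ∃ k, q.1 < k ∧ 2 * ‖q.2‖ + M < ‖x k‖ := fun q =>
    ((eventually_gt_atTop q.1).and (hx.eventually_gt_atTop _)).exists
  choose next hlt hnorm using hnext
  -- the state is the last index chosen together with the partial sum so far
  let step : ℕ × X → ℕ × X := fun q => (next q, q.2 + x (next q))
  let t : ℕ → ℕ := fun r => (step^[r + 1] (K, P)).1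
  have hstep : ∀ r, step^[r + 1 + 1] (K, P) = step (step^[r + 1] (K, P)) := fun r =>
    Function.iterate_succ_apply' _ _ _
  have hsum : ∀ r, (step^[r + 1] (K, P)).2 = P + ∑ p ∈ Finset.range (r + 1), x (t p) := by
    intro r
    induction r with
    | zero => simp [step, t]
    | succ r ih =>
      rw [Finset.sum_range_succ, ← add_assoc, ← ih]
      simp only [t, hstep, step]
  refine ⟨t, strictMono_nat_of_lt_succ fun r => ?_, hlt (K, P), fun r => ?_⟩
  · simp only [t, hstep]
    exact hlt _
  · rw [← hsum, Function.iterate_succ_apply']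
    set q := step^[r] (K, P)
    have := norm_sub_norm_le (x (next q)) (-q.2)
    rw [sub_neg_eq_add, norm_neg, add_comm] at this
    linarith [hnorm q, norm_nonneg q.2]

theorem exists_extension_eventually_lt_norm_of_frequently_lt
    (hx : ∀ ε > 0, ∃ᶠ n in atTop, ‖x n‖ < ε) {s' : ℕ → ℕ} (hs' : StrictMono s')
    (hub : ¬ ∃ M : ℝ, ∀ n : ℕ, ‖∑ i ∈ Finset.range n, x (s' i)‖ ≤ M)
    {s₀ : ℕ → ℕ} (hs₀ : StrictMono s₀) (N : ℕ) (M : ℝ) :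
    ∃ s : ℕ → ℕ, StrictMono s ∧ (∀ i < N, s i = s₀ i) ∧
      ∀ᶠ m in atTop, M < ‖∑ i ∈ Finset.range m, x (s i)‖ := by
  set P := ∑ i ∈ Finset.range N, x (s₀ i)
  obtain ⟨c, hc⟩ := exists_lt_norm_sum_range_add hub (s₀ N) (|M| + 1 + ‖P‖)
  have hc0 : 0 < c := by
    rw [Nat.pos_iff_ne_zero]
    rintro rfl
    simp only [Finset.range_zero, Finset.sum_empty, norm_zero] at hc
    linarith [abs_nonneg M, norm_nonneg P]
  obtain ⟨t, ht, ht0, hsmall⟩ := exists_strictMono_norm_sum_le_one hx (s' (s₀ N + c))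
  have hblock : StrictMono fun p => s' (s₀ N + p) := hs'.comp (strictMono_id.const_add _)
  refine ⟨spliceAt N s₀ (spliceAt c (fun p => s' (s₀ N + p)) t),
    hs₀.spliceAt (hblock.spliceAt ht fun p hp => (hs' (by omega)).trans ht0) fun p hp => ?_,
    fun i hi => spliceAt_of_lt hi, eventually_atTop.2 ⟨N + c, fun m hm => ?_⟩⟩
  · rw [spliceAt_of_lt hc0, add_zero]
    exact (hs₀ hp).trans_le hs'.le_apply
  · obtain ⟨r, rfl⟩ := Nat.exists_eq_add_of_le hm
    rw [add_assoc, sum_range_spliceAt, sum_range_spliceAt]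
    set B := ∑ p ∈ Finset.range c, x (s' (s₀ N + p))
    set T := ∑ p ∈ Finset.range r, x (t p)
    have h₁ := norm_sub_le (P + (B + T)) (P + T)
    rw [show P + (B + T) - (P + T) = B by abel] at h₁
    linarith [norm_add_le P T, hsmall r, le_abs_self M]

theorem exists_extension_eventually_lt_norm_of_tendsto
    (hx : Tendsto (fun n => ‖x n‖) atTop atTop) {s₀ : ℕ → ℕ} (hs₀ : StrictMono s₀)
    (N : ℕ) (M : ℝ) :
    ∃ s : ℕ → ℕ, StrictMono s ∧ (∀ i < N, s i = s₀ i) ∧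
      ∀ᶠ m in atTop, M < ‖∑ i ∈ Finset.range m, x (s i)‖ := by
  obtain ⟨t, ht, ht0, hsum⟩ :=
    exists_strictMono_lt_norm_add_sum hx (∑ i ∈ Finset.range N, x (s₀ i)) (s₀ N) M
  refine ⟨spliceAt N s₀ t, hs₀.spliceAt ht fun p hp => (hs₀ hp).trans ht0,
    fun i hi => spliceAt_of_lt hi, eventually_atTop.2 ⟨N + 1, fun m hm => ?_⟩⟩
  obtain ⟨r, rfl⟩ : ∃ r, m = N + (r + 1) := ⟨m - N - 1, by omega⟩
  rw [sum_range_spliceAt]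
  exact hsum r

theorem exists_extension_eventually_lt_norm
    (hliminf : liminf (fun n => ‖x n‖) atTop = 0) {s' : ℕ → ℕ} (hs' : StrictMono s')
    (hub : ¬ ∃ M : ℝ, ∀ n : ℕ, ‖∑ i ∈ Finset.range n, x (s' i)‖ ≤ M)
    {s₀ : ℕ → ℕ} (hs₀ : StrictMono s₀) (N : ℕ) (M : ℝ) :
    ∃ s : ℕ → ℕ, StrictMono s ∧ (∀ i < N, s i = s₀ i) ∧
      ∀ᶠ m in atTop, M < ‖∑ i ∈ Finset.range m, x (s i)‖ := by
  rcases frequently_lt_or_tendsto_atTop_of_liminf_eq_zero hliminf with h | h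
  · exact exists_extension_eventually_lt_norm_of_frequently_lt h hs' hub hs₀ N M
  · exact exists_extension_eventually_lt_norm_of_tendsto h hs₀ N M

end PartialSums

theorem IncSeq.exists_forall_mem_of_mem_interior {F : Set IncSeq} {s₀ : IncSeq}
    (h : s₀ ∈ interior F) : ∃ N, ∀ s : IncSeq, (∀ i < N, s.1 i = s₀.1 i) → s ∈ F := by
  obtain ⟨u, hu, huF⟩ := (mem_nhds_induced _ _ _).1 (mem_interior_iff_mem_nhds.1 h)
  obtain ⟨N, hN⟩ := exists_cylinder_subset_of_mem_nhds hu
  exact ⟨N, fun s hs => huF (hN hs)⟩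

theorem isNowhereDense_iInter_iUnion_norm_sum_le {X : Type*} [SeminormedAddCommGroup X]
    {x : ℕ → X} {M : ℝ}
    (hext : ∀ s₀ : ℕ → ℕ, StrictMono s₀ → ∀ N, ∃ s : ℕ → ℕ, StrictMono s ∧
      (∀ i < N, s i = s₀ i) ∧ ∀ᶠ m in atTop, M < ‖∑ i ∈ Finset.range m, x (s i)‖)
    {n : ℕ → ℕ} (hn : StrictMono n) (j : ℕ) :
    IsNowhereDense (⋂ i ≥ j, ⋃ m ∈ Ico (n i) (n (i + 1)),
      {s : IncSeq | ‖∑ p ∈ Finset.range m, x (s.1 p)‖ ≤ M}) := by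
  refine (IsClosed.isNowhereDense_iff <| isClosed_biInter fun i _ =>
    (finite_Ico _ _).isClosed_biUnion fun m _ =>
      isClosed_le (continuous_norm.comp <| continuous_finsetSum _ fun p _ =>
        (continuous_of_discreteTopology (f := x)).comp
          ((continuous_apply p).comp continuous_subtype_val)) continuous_const).2
    (eq_empty_iff_forall_notMem.2 fun s₀ hs₀ => ?_)
  obtain ⟨N, hN⟩ := IncSeq.exists_forall_mem_of_mem_interior hs₀
  obtain ⟨s, hs, hsN, hsM⟩ := hext s₀.1 s₀.2 N
  obtain ⟨N', hN'⟩ := eventually_atTop.1 hsM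
  obtain ⟨m, hm, hmM⟩ :=
    mem_iUnion₂.1 (mem_iInter₂.1 (hN ⟨s, hs⟩ hsN) (max j N') (le_max_left j N' :))
  exact (hN' m ((le_max_right _ _).trans (hn.le_apply.trans hm.1))).not_ge hmM

theorem E_ideal_meager_general
    {X : Type*} [NormedAddCommGroup X]
    (x : ℕ → X)
    (hliminf : Filter.liminf (fun n => ‖x n‖) atTop = 0)
    (I : Set (Set ℕ))
    (hUnion : ∀ A B : Set ℕ, A ∈ I → B ∈ I → A ∪ B ∈ I)
    (hSub : ∀ A B : Set ℕ, A ⊆ B → B ∈ I → A ∈ I)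
    (hProper : (Set.univ : Set ℕ) ∉ I)
    (hFin : ∀ A : Set ℕ, A.Finite → A ∈ I)
    (hBP : IdealHasBaireProperty I)
    (s' : ℕ → ℕ) (hs' : StrictMono s')
    (hub : ¬ ∃ M : ℝ, ∀ n : ℕ, ‖∑ i ∈ Finset.range n, x (s' i)‖ ≤ M) :
    IsMeagre {s : IncSeq |
      ∃ M > (0 : ℝ), {n : ℕ | M < ‖∑ i ∈ Finset.range n, x (s.1 i)‖} ∈ I} := by
  obtain ⟨n, hn, hI⟩ :=
    exists_strictMono_eventually_not_Ico_subset hSub (hBP.isMeagre hUnion hSub hProper hFin)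
  refine (isMeagre_iUnion fun M : ℕ => isMeagre_iUnion fun j =>
    (isNowhereDense_iInter_iUnion_norm_sum_le
      (fun s₀ hs₀ N => exists_extension_eventually_lt_norm hliminf hs' hub hs₀ N M)
      hn j).isMeagre).mono ?_
  rintro s ⟨M, -, hM⟩
  have hA : {m | (⌈M⌉₊ : ℝ) < ‖∑ i ∈ Finset.range m, x (s.1 i)‖} ∈ I :=
    hSub _ _ (fun m hm => (Nat.le_ceil M).trans_lt hm) hM
  obtain ⟨j, hj⟩ := eventually_atTop.1 (hI _ hA)
  refine mem_iUnion₂.2 ⟨⌈M⌉₊, j, mem_iInter₂.2 fun i hi => ?_⟩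
  obtain ⟨m, hm, hmM⟩ := not_subset.1 (hj i hi)
  exact mem_iUnion₂.2 ⟨m, hm, by simpa using hmM⟩

theorem E_ideal_meager
    {X : Type*} [NormedAddCommGroup X] [NormedSpace ℝ X] [CompleteSpace X]
    (x : ℕ → X)
    (hliminf : Filter.liminf (fun n => ‖x n‖) atTop = 0)
    (I : Set (Set ℕ))
    (hEmpty : ∅ ∈ I)
    (hUnion : ∀ A B : Set ℕ, A ∈ I → B ∈ I → A ∪ B ∈ I)
    (hSub : ∀ A B : Set ℕ, A ⊆ B → B ∈ I → A ∈ I)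
    (hProper : (Set.univ : Set ℕ) ∉ I)
    (hFin : ∀ A : Set ℕ, A.Finite → A ∈ I)
    (hBP : IdealHasBaireProperty I)
    (s' : ℕ → ℕ) (hs' : StrictMono s')
    (hub : ¬ ∃ M : ℝ, ∀ n : ℕ, ‖∑ i ∈ Finset.range n, x (s' i)‖ ≤ M) :
    IsMeagre {s : IncSeq |
      ∃ M > (0 : ℝ), {n : ℕ | M < ‖∑ i ∈ Finset.range n, x (s.1 i)‖} ∈ I} :=
  E_ideal_meager_general x hliminf I hUnion hSub hProper hFin hBP s' hs' hub
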